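/- arXiv:2401.09406 — 7 statements merged into one kernel-verified Lean document; each statement's English description precedes it below -/
import Mathlib

section
/- Let s > 0 and let μ be a positive finite Borel measure on [0,1) whose moments satisfy μ_n = O(n^{-s}). Then μ is an s-Carleson measure, i.e., there exists D > 0 such that μ([t,1)) ≤ D(1-t)^s for all t ∈ [0,1). -/
open MeasureTheory

theorem carleson_of_moment_bigO
    (μ : Measure ℝ) [IsFiniteMeasure μ]
    (hsupp : μ (Set.Ico (0:ℝ) 1)ᶜ = 0)
    (s : ℝ) (hs : 0 < s)
    (hO : ∃ C > 0, ∀ n : ℕ, 1 ≤ n → (∫ t, t ^ n ∂μ) ≤ C * (n : ℝ) ^ (-s)) :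
    ∃ D > 0, ∀ t ∈ Set.Ico (0:ℝ) 1,
      (μ (Set.Ico t 1)).toReal ≤ D * (1 - t) ^ s := by
  obtain ⟨C, hC, hmom⟩ := hO
  have hae : ∀ᵐ x ∂μ, x ∈ Set.Ico (0:ℝ) 1 := by
    rw [MeasureTheory.ae_iff]
    exact hsupp
  refine ⟨(μ Set.univ).toReal * (2:ℝ) ^ s + Real.exp 3 * C, by positivity, ?_⟩
  rintro t ⟨ht0, ht1⟩
  have hu : 0 < 1 - t := by linarith
  have hD0 : (0:ℝ) ≤ (μ Set.univ).toReal * (2:ℝ) ^ s := by positivity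
  have hmuniv : (μ (Set.Ico t 1)).toReal ≤ (μ Set.univ).toReal :=
    ENNReal.toReal_mono (measure_ne_top μ _) (measure_mono (Set.subset_univ _))
  by_cases hhalf : t ≤ 1/2
  · -- easy case: (1-t) ≥ 1/2
    have h2 : (1:ℝ) ≤ 2 * (1 - t) := by linarith
    have hone : (1:ℝ) ≤ (2 * (1 - t)) ^ s := Real.one_le_rpow h2 hs.le
    have hmul : (2 * (1 - t) : ℝ) ^ s = (2:ℝ) ^ s * (1 - t) ^ s :=
      Real.mul_rpow (by norm_num) hu.le
    rw [hmul] at hone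
    have hexpC : (0:ℝ) ≤ Real.exp 3 * C * (1 - t) ^ s := by positivity
    have hup : (0:ℝ) ≤ (1 - t) ^ s := by positivity
    nlinarith [ENNReal.toReal_nonneg (a := μ Set.univ)]
  · push_neg at hhalf
    set u := 1 - t with hu_def
    have hu2 : u ≤ 1/2 := by simp only [hu_def]; linarith
    have hupos : 0 < u := hu
    set n := ⌈u⁻¹⌉₊ with hn_def
    have hn1 : u⁻¹ ≤ (n:ℝ) := Nat.le_ceil _
    have hn2 : (n:ℝ) < u⁻¹ + 1 := Nat.ceil_lt_add_one (by positivity)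
    have hninv : (2:ℝ) ≤ u⁻¹ := by
      nlinarith [inv_mul_cancel₀ hupos.ne']
    have hnpos : (0:ℝ) < n := lt_of_lt_of_le (by norm_num) (le_trans hninv hn1)
    have hn1' : 1 ≤ n := Nat.one_le_ceil_iff.mpr (by positivity)
    -- exp(-2u) ≤ t
    have htpos : 0 < t := by linarith
    have hexpt : Real.exp (-(2 * u)) ≤ t := by
      have h1 : 1 + 2 * u ≤ Real.exp (2 * u) := by
        have := Real.add_one_le_exp (2 * u); linarith
      have h2 : (1:ℝ) ≤ t * (1 + 2 * u) := by nlinarith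
      rw [Real.exp_neg, inv_le_comm₀ (Real.exp_pos _) htpos]
      have h3 : t⁻¹ ≤ 1 + 2 * u := by
        rw [inv_le_iff_one_le_mul₀ htpos]
        linarith [h2]
      linarith
    -- lower bound on t^n
    have htn : Real.exp (-3) ≤ t ^ n := by
      have h1 : Real.exp (-(2 * u)) ^ n ≤ t ^ n :=
        pow_le_pow_left₀ (Real.exp_pos _).le hexpt n
      have h2 : Real.exp (-(2 * u)) ^ n = Real.exp (-(2 * u) * n) := by
        rw [← Real.exp_nat_mul]; ring_nf
      have h3 : (-3:ℝ) ≤ -(2 * u) * n := by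
        have : (2 * u) * n ≤ 3 := by
          have := mul_le_mul_of_nonneg_left hn2.le (by positivity : (0:ℝ) ≤ 2 * u)
          have huinv : u * u⁻¹ = 1 := mul_inv_cancel₀ hupos.ne'
          nlinarith
        nlinarith
      calc Real.exp (-3) ≤ Real.exp (-(2 * u) * n) := Real.exp_le_exp.mpr h3
        _ = Real.exp (-(2 * u)) ^ n := h2.symm
        _ ≤ t ^ n := h1
    -- integrability
    have hmeas : AEStronglyMeasurable (fun x : ℝ => x ^ n) μ :=
      (measurable_id.pow_const n).aestronglyMeasurable
    have hint : Integrable (fun x : ℝ => x ^ n) μ := by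
      refine (integrable_const (1:ℝ)).mono' hmeas ?_
      filter_upwards [hae] with x hx
      rw [Real.norm_eq_abs, abs_pow]
      calc |x| ^ n ≤ 1 ^ n := by
            apply pow_le_pow_left₀ (abs_nonneg x)
            rw [abs_le]; exact ⟨by linarith [hx.1], by linarith [hx.2]⟩
        _ = 1 := one_pow n
    -- key bound
    have hnonneg : 0 ≤ᵐ[μ] fun x : ℝ => x ^ n := by
      filter_upwards [hae] with x hx
      exact pow_nonneg hx.1 n
    have key : (μ (Set.Ico t 1)).toReal * t ^ n ≤ ∫ x, x ^ n ∂μ := by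
      have h1 : ∫ x in Set.Ico t 1, x ^ n ∂μ ≤ ∫ x, x ^ n ∂μ :=
        setIntegral_le_integral hint hnonneg
      have h2 : (μ (Set.Ico t 1)).toReal * t ^ n ≤ ∫ x in Set.Ico t 1, x ^ n ∂μ := by
        have hc : ∫ _ in Set.Ico t 1, (t ^ n : ℝ) ∂μ = (μ (Set.Ico t 1)).toReal * t ^ n := by
          rw [setIntegral_const]; ring_nf; simp [mul_comm]; exact Or.inl rfl
        rw [← hc]
        refine setIntegral_mono_on (integrable_const _) hint.integrableOn
          measurableSet_Ico ?_
        intro x hx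
        exact pow_le_pow_left₀ ht0 hx.1 n
      linarith
    have hmomn : (∫ x, x ^ n ∂μ) ≤ C * (n:ℝ) ^ (-s) := hmom n hn1'
    -- n^(-s) ≤ u^s
    have hns : (n:ℝ) ^ (-s) ≤ u ^ s := by
      have h1 : (n:ℝ) ^ (-s) ≤ (u⁻¹) ^ (-s) := by
        apply Real.rpow_le_rpow_of_nonpos (by positivity) hn1 (by linarith)
      have h2 : (u⁻¹ : ℝ) ^ (-s) = u ^ s := by
        rw [Real.inv_rpow hupos.le, Real.rpow_neg hupos.le, inv_inv]
      rw [h2] at h1; exact h1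
    -- finish
    have hm0 : 0 ≤ (μ (Set.Ico t 1)).toReal := ENNReal.toReal_nonneg
    have hfinal : (μ (Set.Ico t 1)).toReal ≤ Real.exp 3 * C * u ^ s := by
      have h1 : (μ (Set.Ico t 1)).toReal * Real.exp (-3) ≤ C * u ^ s := by
        calc (μ (Set.Ico t 1)).toReal * Real.exp (-3)
            ≤ (μ (Set.Ico t 1)).toReal * t ^ n := by
              exact mul_le_mul_of_nonneg_left htn hm0
          _ ≤ ∫ x, x ^ n ∂μ := key
          _ ≤ C * (n:ℝ) ^ (-s) := hmomn
          _ ≤ C * u ^ s := mul_le_mul_of_nonneg_left hns hC.le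
      have he : Real.exp (-3) * Real.exp 3 = 1 := by
        rw [← Real.exp_add]; norm_num
      nlinarith [Real.exp_pos (3:ℝ), Real.exp_pos (-3:ℝ)]
    have hus : (0:ℝ) ≤ u ^ s := by positivity
    nlinarith
end

section
/- Let s > 0 and let μ be a positive finite Borel measure on [0,1) whose moments satisfy μ_n = o(n^{-s}). Then μ is a vanishing s-Carleson measure, i.e., μ([t,1)) = o((1-t)^s) as t → 1⁻. -/
open MeasureTheory Filter

theorem vanishing_carleson_of_moment_littleO
    (μ : Measure ℝ) [IsFiniteMeasure μ]
    (hsupp : μ (Set.Ico (0:ℝ) 1)ᶜ = 0)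
    (s : ℝ) (hs : 0 < s)
    (ho : Tendsto (fun n : ℕ => (n : ℝ) ^ s * (∫ t, t ^ n ∂μ)) atTop (nhds 0)) :
    Tendsto (fun t : ℝ => (μ (Set.Ico t 1)).toReal / (1 - t) ^ s)
      (nhdsWithin 1 (Set.Iio 1)) (nhds 0) := by
  have hμae : ∀ᵐ x ∂μ, x ∈ Set.Ico (0:ℝ) 1 := by
    exact MeasureTheory.mem_ae_iff.mpr hsupp
  -- integrability of monomials
  have hint : ∀ n : ℕ, Integrable (fun x : ℝ => x ^ n) μ := by
    intro n
    refine (integrable_const (1:ℝ)).mono' (Continuous.aestronglyMeasurable (by continuity)) ?_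
    filter_upwards [hμae] with x hx
    rw [Real.norm_eq_abs, abs_pow]
    exact pow_le_one₀ (abs_nonneg x) (abs_le.mpr ⟨by linarith [hx.1], le_of_lt hx.2⟩)
  have hnonneg : ∀ n : ℕ, 0 ≤ᵐ[μ] fun x : ℝ => x ^ n := by
    intro n
    filter_upwards [hμae] with x hx
    exact pow_nonneg hx.1 n
  set N : ℝ → ℕ := fun t => ⌈(1 - t)⁻¹⌉₊ with hN
  have hNt : Tendsto N (nhdsWithin 1 (Set.Iio 1)) atTop := by
    apply tendsto_nat_ceil_atTop.comp
    apply tendsto_inv_nhdsGT_zero.comp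
    apply tendsto_nhdsWithin_of_tendsto_nhds_of_eventually_within
    · have : Tendsto (fun t : ℝ => 1 - t) (nhdsWithin 1 (Set.Iio 1)) (nhds (1 - 1)) :=
        (tendsto_const_nhds.sub tendsto_id).mono_left nhdsWithin_le_nhds
      simpa using this
    · filter_upwards [self_mem_nhdsWithin] with t (ht : t < 1)
      simpa using ht
  -- the key pointwise bound for t ∈ (1/2, 1)
  have key : ∀ t : ℝ, 1/2 < t → t < 1 →
      (μ (Set.Ico t 1)).toReal / (1 - t) ^ s ≤
        Real.exp 4 * ((N t : ℝ) ^ s * ∫ x, x ^ (N t) ∂μ) := by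
    intro t ht2 ht1
    have h1t : (0:ℝ) < 1 - t := by linarith
    have hle : (1 - t)⁻¹ ≤ (N t : ℝ) := Nat.le_ceil _
    have hNub : (N t : ℝ) ≤ 2 * (1 - t)⁻¹ := by
      have h2 : (2:ℝ) ≤ (1 - t)⁻¹ := by
        rw [le_inv_comm₀ (by norm_num) h1t]; linarith
      have := (Nat.ceil_lt_add_one (by positivity : (0:ℝ) ≤ (1 - t)⁻¹)).le
      calc (N t : ℝ) ≤ (1 - t)⁻¹ + 1 := this
        _ ≤ 2 * (1 - t)⁻¹ := by linarith
    have hN1t : (N t : ℝ) * (1 - t) ≤ 2 := by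
      calc (N t : ℝ) * (1 - t) ≤ 2 * (1 - t)⁻¹ * (1 - t) :=
            mul_le_mul_of_nonneg_right hNub h1t.le
        _ = 2 := by field_simp
    -- t ^ N t ≥ exp (-4)
    have hexp : Real.exp (-4) ≤ t ^ (N t) := by
      have h1 : Real.exp (-(2 * (1 - t))) ≤ t := by
        have := Real.add_one_le_exp (2 * (1 - t))
        rw [Real.exp_neg]
        have hpos : (0:ℝ) < 1 + 2 * (1 - t) := by linarith
        calc (Real.exp (2 * (1 - t)))⁻¹ ≤ (1 + 2 * (1 - t))⁻¹ := by
              apply inv_anti₀ hpos; linarith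
          _ ≤ t := by
              rw [inv_eq_one_div, div_le_iff₀ hpos]; nlinarith
      calc Real.exp (-4) ≤ Real.exp (-(2 * (1 - t)) * (N t)) := by
            apply Real.exp_le_exp.mpr
            nlinarith [hN1t]
        _ = (Real.exp (-(2 * (1 - t)))) ^ (N t) := by
            rw [← Real.exp_nat_mul]; ring_nf
        _ ≤ t ^ (N t) := pow_le_pow_left₀ (Real.exp_pos _).le h1 _
    -- measure bound
    have hmb : Real.exp (-4) * (μ (Set.Ico t 1)).toReal ≤ ∫ x, x ^ (N t) ∂μ := by
      have hms : MeasurableSet (Set.Ico t 1) := measurableSet_Ico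
      have h1 : Real.exp (-4) * (μ (Set.Ico t 1)).toReal ≤ ∫ x in Set.Ico t 1, x ^ (N t) ∂μ := by
        apply setIntegral_ge_of_const_le_real hms (measure_ne_top μ _)
        · intro x hx
          exact le_trans hexp (pow_le_pow_left₀ (by linarith) hx.1 _)
        · exact (hint (N t)).integrableOn
      exact h1.trans (setIntegral_le_integral (hint (N t)) (hnonneg (N t)))
    have hInonneg : 0 ≤ ∫ x, x ^ (N t) ∂μ := integral_nonneg_of_ae (hnonneg (N t))
    -- (1-t)^{-s} ≤ N^s
    have hrs : ((1 - t) ^ s)⁻¹ ≤ (N t : ℝ) ^ s := by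
      rw [← Real.inv_rpow h1t.le]
      exact Real.rpow_le_rpow (by positivity) hle hs.le
    have hm : (μ (Set.Ico t 1)).toReal ≤ Real.exp 4 * ∫ x, x ^ (N t) ∂μ := by
      rw [Real.exp_neg] at hmb
      rw [inv_mul_le_iff₀ (Real.exp_pos 4)] at hmb
      exact hmb
    have hmnn : (0:ℝ) ≤ (μ (Set.Ico t 1)).toReal := ENNReal.toReal_nonneg
    have hinn : (0:ℝ) ≤ ((1 - t) ^ s)⁻¹ := by positivity
    calc (μ (Set.Ico t 1)).toReal / (1 - t) ^ s
        = (μ (Set.Ico t 1)).toReal * ((1 - t) ^ s)⁻¹ := div_eq_mul_inv _ _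
      _ ≤ (Real.exp 4 * ∫ x, x ^ (N t) ∂μ) * (N t : ℝ) ^ s := by
          apply mul_le_mul hm hrs hinn
          positivity
      _ = Real.exp 4 * ((N t : ℝ) ^ s * ∫ x, x ^ (N t) ∂μ) := by ring
  -- conclude by squeezing
  have hg : Tendsto (fun t : ℝ => Real.exp 4 * ((N t : ℝ) ^ s * ∫ x, x ^ (N t) ∂μ))
      (nhdsWithin 1 (Set.Iio 1)) (nhds 0) := by
    have := (ho.comp hNt).const_mul (Real.exp 4)
    simpa using this
  refine squeeze_zero' ?_ ?_ hg
  · filter_upwards [self_mem_nhdsWithin] with t (ht : t < 1)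
    have : (0:ℝ) < 1 - t := by linarith
    positivity
  · filter_upwards [Ioo_mem_nhdsLT_of_mem (by norm_num : (1:ℝ) ∈ Set.Ioc (1/2) 1)]
      with t ht
    exact key t ht.1 ht.2
end

section
/- Let μ be a positive finite Borel measure on [0,1) which is a (1-δ)-Carleson measure for some δ < 1, and let γ > 0 with γ + δ > 0. Then sup_{0≤r<1} (1-r)^{γ+δ} ∫₀¹ dμ(t)/(1-tr)^{γ+1} < ∞. -/
open MeasureTheory

/-- Dyadic decomposition of `[0,1)` at scale `s`. -/
def dySet (s : ℝ) : ℕ → Set ℝ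
  | 0 => Set.Icc (1 - 2 * s) 1 ∩ Set.Ico 0 1
  | (n+1) => Set.Icc (1 - 2 ^ (n+2) * s) (1 - 2 ^ (n+1) * s) ∩ Set.Ico 0 1

lemma dySet_measurable (s : ℝ) (n : ℕ) : MeasurableSet (dySet s n) := by
  cases n <;> exact (measurableSet_Icc.inter measurableSet_Ico)

lemma dySet_subset (s : ℝ) (n : ℕ) :
    dySet s n ⊆ Set.Ico (max 0 (1 - 2 ^ (n+1) * s)) 1 := by
  cases n with
  | zero =>
    rintro t ⟨⟨h1, _⟩, h0, h2⟩
    exact ⟨max_le h0 (by norm_num at h1 ⊢; linarith), h2⟩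
  | succ n =>
    rintro t ⟨⟨h1, _⟩, h0, h2⟩
    exact ⟨max_le h0 h1, h2⟩

lemma dySet_cover {s : ℝ} (hs : 0 < s) {t : ℝ} (ht : t ∈ Set.Ico (0:ℝ) 1) :
    ∃ n, t ∈ dySet s n := by
  obtain ⟨ht0, ht1⟩ := ht
  by_cases h2 : 1 - t ≤ 2 * s
  · exact ⟨0, ⟨by constructor <;> linarith, ht0, ht1⟩⟩
  · push_neg at h2
    set x := (1 - t) / s with hx
    have hx2 : (2:ℝ) < x := by
      rw [hx, lt_div_iff₀ hs]; linarith
    set k := ⌊x⌋₊ with hk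
    have hk2 : 2 ≤ k := Nat.le_floor (by exact_mod_cast hx2.le)
    set m := Nat.log 2 k with hm
    have hm1 : 1 ≤ m := Nat.log_pos (by norm_num) hk2
    have h_low : (2:ℝ) ^ m ≤ x := by
      have h1 : (2:ℕ) ^ m ≤ k := Nat.pow_log_le_self 2 (by omega)
      have h2 : (k:ℝ) ≤ x := Nat.floor_le (by positivity)
      calc (2:ℝ) ^ m = ((2^m : ℕ) : ℝ) := by push_cast; ring
        _ ≤ (k:ℝ) := by exact_mod_cast h1
        _ ≤ x := h2
    have h_high : x ≤ (2:ℝ) ^ (m+1) := by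
      have h1 : k < 2 ^ (m+1) := Nat.lt_pow_succ_log_self (by norm_num) k
      have h2 : x < (k:ℝ) + 1 := Nat.lt_floor_add_one x
      have h3 : ((k:ℝ) + 1) ≤ ((2^(m+1) : ℕ) : ℝ) := by exact_mod_cast h1
      calc x ≤ (k:ℝ) + 1 := h2.le
        _ ≤ ((2^(m+1) : ℕ) : ℝ) := h3
        _ = (2:ℝ) ^ (m+1) := by push_cast; ring
    obtain ⟨n, hmn⟩ : ∃ n, m = n + 1 := ⟨m - 1, by omega⟩
    rw [hmn] at h_low h_high
    refine ⟨n + 1, ⟨⟨?_, ?_⟩, ht0, ht1⟩⟩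
    · have : 1 - t ≤ 2 ^ (n+2) * s := by
        rw [hx] at h_high
        calc 1 - t = ((1-t)/s) * s := by field_simp
          _ ≤ (2:ℝ)^(n+2) * s := by
              apply mul_le_mul_of_nonneg_right h_high hs.le
      linarith
    · have : (2:ℝ) ^ (n+1) * s ≤ 1 - t := by
        rw [hx] at h_low
        calc (2:ℝ)^(n+1) * s ≤ ((1-t)/s) * s := by
              apply mul_le_mul_of_nonneg_right h_low hs.le
          _ = 1 - t := by field_simp
      linarith

lemma one_sub_mul_ge {r t : ℝ} (hr : r ∈ Set.Ico (0:ℝ) 1) (n : ℕ)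
    (h : t ∈ dySet (1 - r) n) : 2 ^ n * (1 - r) ≤ 1 - t * r := by
  obtain ⟨hr0, hr1⟩ := hr
  cases n with
  | zero =>
    obtain ⟨_, ht0, ht1⟩ := h
    have : r * (1 - t) ≥ 0 := mul_nonneg hr0 (by linarith)
    simp only [pow_zero, one_mul]
    nlinarith
  | succ n =>
    obtain ⟨⟨_, h1⟩, ht0, ht1⟩ := h
    have h2 : t * r ≤ t := by nlinarith
    linarith

theorem carleson_integral_estimate
    (μ : Measure ℝ) [IsFiniteMeasure μ]
    (hsupp : μ (Set.Ico (0:ℝ) 1)ᶜ = 0)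
    (δ γ : ℝ) (hδ : δ < 1) (hγ : 0 < γ) (hγδ : 0 < γ + δ)
    (hC : ∃ C > 0, ∀ t ∈ Set.Ico (0:ℝ) 1,
      (μ (Set.Ico t 1)).toReal ≤ C * (1 - t) ^ (1 - δ)) :
    ∃ M : ℝ, ∀ r ∈ Set.Ico (0:ℝ) 1,
      (1 - r) ^ (γ + δ) * (∫ t, 1 / (1 - t * r) ^ (γ + 1) ∂μ) ≤ M := by
  obtain ⟨C, hC0, hCb⟩ := hC
  have hq0 : (0:ℝ) < 2 ^ (-(γ+δ)) := Real.rpow_pos_of_pos two_pos _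
  have hq1 : (2:ℝ) ^ (-(γ+δ)) < 1 :=
    Real.rpow_lt_one_of_one_lt_of_neg one_lt_two (by linarith)
  refine ⟨C * 2 ^ (1-δ) * (1 - 2 ^ (-(γ+δ)))⁻¹, ?_⟩
  intro r hr
  obtain ⟨hr0, hr1⟩ := hr
  have hs : (0:ℝ) < 1 - r := by linarith
  set K : ℝ := C * 2 ^ (1-δ) * (1 - 2 ^ (-(γ+δ)))⁻¹ with hK
  have hA0 : (0:ℝ) ≤ C * 2 ^ (1-δ) * (1-r) ^ (-(γ+δ)) :=
    mul_nonneg (mul_nonneg hC0.le (Real.rpow_nonneg two_pos.le _)) (Real.rpow_nonneg hs.le _)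
  -- pointwise bound of the integrand on each dyadic piece
  have hfb : ∀ n : ℕ, ∀ t ∈ dySet (1-r) n,
      ENNReal.ofReal (1 / (1 - t * r) ^ (γ+1)) ≤
      ENNReal.ofReal ((2 ^ n * (1-r)) ^ (-(γ+1))) := by
    intro n t htm
    apply ENNReal.ofReal_le_ofReal
    have hbase : 2 ^ n * (1-r) ≤ 1 - t * r := one_sub_mul_ge ⟨hr0, hr1⟩ n htm
    have hb0 : (0:ℝ) < 2 ^ n * (1-r) := by positivity
    rw [Real.rpow_neg hb0.le, ← one_div]
    exact one_div_le_one_div_of_le (Real.rpow_pos_of_pos hb0 _)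
      (Real.rpow_le_rpow hb0.le hbase (by linarith))
  -- measure bound of each dyadic piece
  have hμb : ∀ n : ℕ, μ (dySet (1-r) n) ≤
      ENNReal.ofReal (C * (2 ^ (n+1) * (1-r)) ^ (1-δ)) := by
    intro n
    have hp : (0:ℝ) < 2 ^ (n+1) * (1-r) := by positivity
    have ht01 : max 0 (1 - 2 ^ (n+1) * (1-r)) ∈ Set.Ico (0:ℝ) 1 :=
      ⟨le_max_left _ _, max_lt one_pos (by linarith)⟩
    have h1t0 : (0:ℝ) ≤ 1 - max 0 (1 - 2 ^ (n+1) * (1-r)) := by linarith [ht01.2]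
    calc μ (dySet (1-r) n) ≤ μ (Set.Ico (max 0 (1 - 2 ^ (n+1) * (1-r))) 1) :=
          measure_mono (dySet_subset (1-r) n)
      _ ≤ ENNReal.ofReal (C * (1 - max 0 (1 - 2 ^ (n+1) * (1-r))) ^ (1-δ)) := by
          rw [ENNReal.le_ofReal_iff_toReal_le (measure_ne_top μ _)
            (mul_nonneg hC0.le (Real.rpow_nonneg h1t0 _))]
          exact hCb _ ht01
      _ ≤ ENNReal.ofReal (C * (2 ^ (n+1) * (1-r)) ^ (1-δ)) := by
          apply ENNReal.ofReal_le_ofReal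
          refine mul_le_mul_of_nonneg_left ?_ hC0.le
          exact Real.rpow_le_rpow h1t0 (by linarith [le_max_right (0:ℝ) (1 - 2 ^ (n+1) * (1-r))])
            (by linarith)
  -- the arithmetic identity for the term bound
  have hterm : ∀ n : ℕ, (2 ^ n * (1-r)) ^ (-(γ+1)) * (C * (2 ^ (n+1) * (1-r)) ^ (1-δ)) =
      (C * 2 ^ (1-δ) * (1-r) ^ (-(γ+δ))) * ((2:ℝ) ^ (-(γ+δ))) ^ n := by
    intro n
    have hcomb : ∀ a b c d : ℝ, (2:ℝ) ^ a * (1-r) ^ c * (C * ((2:ℝ) ^ b * (1-r) ^ d)) =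
        C * 2 ^ (a+b) * (1-r) ^ (c+d) := by
      intro a b c d; rw [Real.rpow_add two_pos, Real.rpow_add hs]; ring
    have e1 : ((2:ℝ) ^ n * (1-r)) ^ (-(γ+1)) =
        (2:ℝ) ^ ((n:ℝ) * (-(γ+1))) * (1-r) ^ (-(γ+1)) := by
      rw [Real.mul_rpow (by positivity) hs.le, ← Real.rpow_natCast 2 n,
        ← Real.rpow_mul (by norm_num)]
    have e2 : ((2:ℝ) ^ (n+1) * (1-r)) ^ (1-δ) =
        (2:ℝ) ^ (((n:ℝ)+1) * (1-δ)) * (1-r) ^ (1-δ) := by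
      rw [Real.mul_rpow (by positivity) hs.le, ← Real.rpow_natCast 2 (n+1),
        ← Real.rpow_mul (by norm_num)]
      push_cast
      ring_nf
    have e3 : ((2:ℝ) ^ (-(γ+δ))) ^ n = (2:ℝ) ^ ((-(γ+δ)) * (n:ℝ)) := by
      rw [← Real.rpow_natCast ((2:ℝ) ^ (-(γ+δ))) n, ← Real.rpow_mul (by norm_num)]
    rw [e1, e2, hcomb, e3,
      show ((n:ℝ) * (-(γ+1)) + ((n:ℝ)+1) * (1-δ)) = (1-δ) + (-(γ+δ)) * (n:ℝ) from by ring,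
      show (-(γ+1) + (1-δ)) = -(γ+δ) from by ring,
      Real.rpow_add two_pos]
    ring
  -- bound for the lintegral over each dyadic piece
  have hset : ∀ n : ℕ, ∫⁻ t in dySet (1-r) n, ENNReal.ofReal (1 / (1 - t * r) ^ (γ+1)) ∂μ ≤
      ENNReal.ofReal ((C * 2 ^ (1-δ) * (1-r) ^ (-(γ+δ))) * ((2:ℝ) ^ (-(γ+δ))) ^ n) := by
    intro n
    calc ∫⁻ t in dySet (1-r) n, ENNReal.ofReal (1 / (1 - t * r) ^ (γ+1)) ∂μ
        ≤ ∫⁻ _ in dySet (1-r) n, ENNReal.ofReal ((2 ^ n * (1-r)) ^ (-(γ+1))) ∂μ :=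
          setLIntegral_mono measurable_const (hfb n)
      _ = ENNReal.ofReal ((2 ^ n * (1-r)) ^ (-(γ+1))) * μ (dySet (1-r) n) :=
          setLIntegral_const _ _
      _ ≤ ENNReal.ofReal ((2 ^ n * (1-r)) ^ (-(γ+1))) *
          ENNReal.ofReal (C * (2 ^ (n+1) * (1-r)) ^ (1-δ)) := mul_le_mul_right (hμb n) _
      _ = ENNReal.ofReal ((2 ^ n * (1-r)) ^ (-(γ+1)) * (C * (2 ^ (n+1) * (1-r)) ^ (1-δ))) :=
          (ENNReal.ofReal_mul (Real.rpow_nonneg (by positivity) _)).symm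
      _ = ENNReal.ofReal ((C * 2 ^ (1-δ) * (1-r) ^ (-(γ+δ))) * ((2:ℝ) ^ (-(γ+δ))) ^ n) := by
          rw [hterm n]
  -- the full lintegral bound
  have hlint : ∫⁻ t, ENNReal.ofReal (1 / (1 - t * r) ^ (γ+1)) ∂μ ≤
      ENNReal.ofReal (K * (1-r) ^ (-(γ+δ))) := by
    have h1 : ∫⁻ t, ENNReal.ofReal (1 / (1 - t * r) ^ (γ+1)) ∂μ =
        ∫⁻ t in Set.Ico (0:ℝ) 1, ENNReal.ofReal (1 / (1 - t * r) ^ (γ+1)) ∂μ := by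
      rw [← lintegral_add_compl (fun t => ENNReal.ofReal (1 / (1 - t * r) ^ (γ+1)))
        measurableSet_Ico (μ := μ), setLIntegral_measure_zero _ _ hsupp, add_zero]
    rw [h1]
    calc ∫⁻ t in Set.Ico (0:ℝ) 1, ENNReal.ofReal (1 / (1 - t * r) ^ (γ+1)) ∂μ
        ≤ ∫⁻ t in ⋃ n, dySet (1-r) n, ENNReal.ofReal (1 / (1 - t * r) ^ (γ+1)) ∂μ :=
          lintegral_mono_set (fun t ht => Set.mem_iUnion.mpr (dySet_cover hs ht))
      _ ≤ ∑' n, ∫⁻ t in dySet (1-r) n, ENNReal.ofReal (1 / (1 - t * r) ^ (γ+1)) ∂μ :=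
          lintegral_iUnion_le _ _
      _ ≤ ∑' n, ENNReal.ofReal ((C * 2 ^ (1-δ) * (1-r) ^ (-(γ+δ))) * ((2:ℝ) ^ (-(γ+δ))) ^ n) :=
          ENNReal.tsum_le_tsum hset
      _ = ENNReal.ofReal (C * 2 ^ (1-δ) * (1-r) ^ (-(γ+δ))) *
          ∑' n : ℕ, (ENNReal.ofReal ((2:ℝ) ^ (-(γ+δ)))) ^ n := by
          simp_rw [ENNReal.ofReal_mul hA0, ENNReal.ofReal_pow hq0.le]
          rw [ENNReal.tsum_mul_left]
      _ = ENNReal.ofReal (C * 2 ^ (1-δ) * (1-r) ^ (-(γ+δ))) *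
          ENNReal.ofReal ((1 - 2 ^ (-(γ+δ)))⁻¹) := by
          rw [ENNReal.tsum_geometric, ← ENNReal.ofReal_one, ← ENNReal.ofReal_sub 1 hq0.le,
            ← ENNReal.ofReal_inv_of_pos (by linarith)]
      _ = ENNReal.ofReal (K * (1-r) ^ (-(γ+δ))) := by
          rw [← ENNReal.ofReal_mul hA0]
          congr 1
          rw [hK]; ring
  -- a.e. nonnegativity
  have hae : 0 ≤ᵐ[μ] fun t : ℝ => 1 / (1 - t * r) ^ (γ+1) := by
    have hae0 : ∀ᵐ t ∂μ, t ∈ Set.Ico (0:ℝ) 1 := by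
      rw [ae_iff]
      convert hsupp using 2
      ext t; simp
    filter_upwards [hae0] with t ht
    obtain ⟨ht0, ht1⟩ := ht
    have hpos : (0:ℝ) < 1 - t * r := by nlinarith
    positivity
  have hfm : Measurable fun t : ℝ => 1 / (1 - t * r) ^ (γ+1) := by fun_prop
  have hint : ∫ t, 1 / (1 - t * r) ^ (γ+1) ∂μ =
      (∫⁻ t, ENNReal.ofReal (1 / (1 - t * r) ^ (γ+1)) ∂μ).toReal :=
    integral_eq_lintegral_of_nonneg_ae hae hfm.aestronglyMeasurable
  have hKs : (0:ℝ) ≤ K * (1-r) ^ (-(γ+δ)) := by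
    apply mul_nonneg _ (Real.rpow_nonneg hs.le _)
    exact mul_nonneg (mul_nonneg hC0.le (Real.rpow_nonneg two_pos.le _))
      (inv_nonneg.mpr (by linarith))
  have hfin : ∫ t, 1 / (1 - t * r) ^ (γ+1) ∂μ ≤ K * (1-r) ^ (-(γ+δ)) := by
    rw [hint]
    calc (∫⁻ t, ENNReal.ofReal (1 / (1 - t * r) ^ (γ+1)) ∂μ).toReal
        ≤ (ENNReal.ofReal (K * (1-r) ^ (-(γ+δ)))).toReal :=
          ENNReal.toReal_mono ENNReal.ofReal_ne_top hlint
      _ = K * (1-r) ^ (-(γ+δ)) := ENNReal.toReal_ofReal hKs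
  calc (1-r) ^ (γ+δ) * (∫ t, 1 / (1 - t * r) ^ (γ+1) ∂μ)
      ≤ (1-r) ^ (γ+δ) * (K * (1-r) ^ (-(γ+δ))) :=
        mul_le_mul_of_nonneg_left hfin (Real.rpow_nonneg hs.le _)
    _ = K := by
        rw [mul_comm K, ← mul_assoc, ← Real.rpow_add hs,
          show (γ+δ) + -(γ+δ) = 0 from by ring, Real.rpow_zero, one_mul]
end

section
/- Let μ be a positive finite Borel measure on [0,1) which is a vanishing (1-δ)-Carleson measure for some δ < 1, and let γ > 0 with γ + δ > 0. Then lim_{r→1⁻} (1-r)^{γ+δ} ∫₀¹ dμ(t)/(1-tr)^{γ+1} = 0. -/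
open MeasureTheory Filter Set
open scoped ENNReal

lemma aux_cont (r p : ℝ) (s : Set ℝ) (h : ∀ u ∈ s, 0 < 1 - u * r) :
    ContinuousOn (fun u : ℝ => (1 - u * r) ^ p) s := by
  intro u hu
  have h1 : ContinuousAt (fun u : ℝ => 1 - u * r) u :=
    (by fun_prop : Continuous fun u : ℝ => 1 - u * r).continuousAt
  have h2 : ContinuousAt (fun x : ℝ => x ^ p) (1 - u * r) :=
    Real.continuousAt_rpow_const _ p (Or.inl (h u hu).ne')
  exact ContinuousAt.continuousWithinAt
    (ContinuousAt.comp (g := fun x : ℝ => x ^ p) (f := fun u : ℝ => 1 - u * r) h2 h1)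

lemma aux_ftc (r p a b : ℝ) (hr : 0 < r) (hp : 0 < p) (hab : a ≤ b) (hb : 0 < 1 - b * r) :
    ∫ u in a..b, (1 - u * r) ^ (-(p+1)) = ((1 - b*r) ^ (-p) - (1 - a*r) ^ (-p)) / (p * r) := by
  have hpos : ∀ u ∈ Set.uIcc a b, 0 < 1 - u * r := by
    intro u hu
    rw [Set.uIcc_of_le hab] at hu
    have : u * r ≤ b * r := mul_le_mul_of_nonneg_right hu.2 hr.le
    linarith
  have key : ∀ u ∈ Set.uIcc a b,
      HasDerivAt (fun x : ℝ => (1 - x * r) ^ (-p) / (p * r)) ((1 - u * r) ^ (-(p+1))) u := by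
    intro u hu
    have h1 : HasDerivAt (fun x : ℝ => 1 - x * r) (-r) u := by
      simpa using ((hasDerivAt_id u).mul_const r).const_sub 1
    have h2 := (Real.hasDerivAt_rpow_const (x := 1 - u * r) (p := -p)
      (Or.inl (hpos u hu).ne')).comp u h1
    have h3 := h2.div_const (p * r)
    refine h3.congr_deriv ?_
    have hne : (1 - u * r) ≠ 0 := (hpos u hu).ne'
    rw [show -p - 1 = -(p+1) by ring]
    field_simp
  rw [intervalIntegral.integral_eq_sub_of_hasDerivAt key ?_]
  · ring
  · exact (aux_cont r (-(p+1)) _ hpos).intervalIntegrable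

set_option maxHeartbeats 1000000 in
lemma key_bound (μ : Measure ℝ) [IsFiniteMeasure μ]
    (hsupp : μ (Set.Ico (0:ℝ) 1)ᶜ = 0)
    (δ γ : ℝ) (hδ : δ < 1) (hγ : 0 < γ) (hγδ : 0 < γ + δ)
    (ε₁ t₀ : ℝ) (hε₁ : 0 < ε₁) (ht₀ : t₀ ∈ Set.Ioo (0:ℝ) 1)
    (hbound : ∀ u, t₀ ≤ u → u < 1 → (μ (Set.Ico u 1)).toReal ≤ ε₁ * (1-u) ^ (1-δ))
    (r : ℝ) (hr : r ∈ Set.Ioo (0:ℝ) 1) :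
    ∫ t, 1 / (1 - t * r) ^ (γ + 1) ∂μ ≤
      (μ Set.univ).toReal * (1 + (γ+1) * (1-t₀) ^ (-(γ+2)))
        + ε₁ * (γ+1) / (γ+δ) * (1-r) ^ (-(γ+δ)) := by
  obtain ⟨hr0, hr1⟩ := hr
  obtain ⟨ht₀0, ht₀1⟩ := ht₀
  set M := (μ Set.univ).toReal with hM
  have hM0 : 0 ≤ M := ENNReal.toReal_nonneg
  have h1r : 0 < 1 - r := by linarith
  have h1t₀ : 0 < 1 - t₀ := by linarith
  -- basic positivity on [0,1)
  have hpos : ∀ t ∈ Set.Ico (0:ℝ) 1, 0 < 1 - t * r := by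
    intro t ht
    have : t * r ≤ t := by nlinarith [ht.1]
    linarith [ht.2]
  have hae : ∀ᵐ t ∂μ, t ∈ Set.Ico (0:ℝ) 1 := by
    rw [MeasureTheory.ae_iff]
    exact hsupp
  have hnn : 0 ≤ᵐ[μ] fun t => 1 / (1 - t * r) ^ (γ + 1) := by
    filter_upwards [hae] with t ht
    have := hpos t ht
    positivity
  have hfm : Measurable fun t : ℝ => 1 / (1 - t * r) ^ (γ + 1) := by fun_prop
  rw [integral_eq_lintegral_of_nonneg_ae hnn hfm.aestronglyMeasurable]
  set RHS := M * (1 + (γ+1) * (1-t₀) ^ (-(γ+2))) + ε₁ * (γ+1) / (γ+δ) * (1-r) ^ (-(γ+δ))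
    with hRHS
  have hRHSnn : 0 ≤ RHS := by
    have h1 : (0:ℝ) ≤ (1-t₀) ^ (-(γ+2)) := Real.rpow_nonneg h1t₀.le _
    have h2 : (0:ℝ) ≤ (1-r) ^ (-(γ+δ)) := Real.rpow_nonneg h1r.le _
    have h3 : (0:ℝ) ≤ ε₁ * (γ+1) / (γ+δ) := by positivity
    have hA : (0:ℝ) ≤ M * (1 + (γ+1) * (1-t₀) ^ (-(γ+2))) :=
      mul_nonneg hM0 (by nlinarith)
    have hB : (0:ℝ) ≤ ε₁ * (γ+1) / (γ+δ) * (1-r) ^ (-(γ+δ)) := mul_nonneg h3 h2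
    rw [hRHS]
    linarith
  refine ENNReal.toReal_le_of_le_ofReal hRHSnn ?_
  -- the kernel
  set g₂ : ℝ → ℝ := fun u => (1 - u * r) ^ (-(γ+2)) with hg₂
  set k : ℝ → ℝ → ℝ≥0∞ := fun t u =>
    Set.indicator (Set.Ioo u 1) (fun _ => ENNReal.ofReal (g₂ u)) t with hk
  set c : ℝ≥0∞ := ENNReal.ofReal ((γ+1) * r) with hc
  -- pointwise identity
  have hpt : ∀ᵐ t ∂μ, ENNReal.ofReal (1 / (1 - t * r) ^ (γ + 1)) =
      1 + c * ∫⁻ u in Set.Ioo (0:ℝ) 1, k t u := by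
    filter_upwards [hae] with t ht
    have h1tr := hpos t ht
    -- inner integral over u equals integral over Ioo 0 t
    have hinner : (∫⁻ u in Set.Ioo (0:ℝ) 1, k t u)
        = ∫⁻ u in Set.Ioo (0:ℝ) t, ENNReal.ofReal (g₂ u) := by
      have hfun : ∀ u : ℝ, k t u =
          Set.indicator (Set.Iio t) (fun u => ENNReal.ofReal (g₂ u)) u := by
        intro u
        show Set.indicator (Set.Ioo u 1) (fun _ => ENNReal.ofReal (g₂ u)) t = _
        simp only [Set.indicator_apply, Set.mem_Ioo, Set.mem_Iio]
        by_cases h : u < t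
        · simp [h, ht.2]
        · simp [h]
      rw [lintegral_congr hfun]
      rw [lintegral_indicator measurableSet_Iio, Measure.restrict_restrict measurableSet_Iio]
      have hset : Set.Iio t ∩ Set.Ioo 0 1 = Set.Ioo 0 t := by
        ext u
        simp only [Set.mem_inter_iff, Set.mem_Iio, Set.mem_Ioo]
        constructor
        · rintro ⟨hu1, hu2⟩; exact ⟨hu2.1, hu1⟩
        · rintro ⟨hu1, hu2⟩; exact ⟨hu2, ⟨hu1, hu2.trans ht.2⟩⟩
      rw [hset]
    have hposIoo : ∀ u ∈ Set.Icc (0:ℝ) t, 0 < 1 - u * r := by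
      intro u hu
      have : u * r ≤ t * r := mul_le_mul_of_nonneg_right hu.2 hr0.le
      linarith
    have hcont : ContinuousOn g₂ (Set.Icc 0 t) := aux_cont r _ _ hposIoo
    have hint : IntegrableOn g₂ (Set.Ioo 0 t) := by
      exact (hcont.integrableOn_Icc).mono_set Set.Ioo_subset_Icc_self
    have hvalue : ∫ u in Set.Ioo (0:ℝ) t, g₂ u
        = ((1 - t*r) ^ (-(γ+1)) - 1) / ((γ+1) * r) := by
      rw [← MeasureTheory.integral_Ioc_eq_integral_Ioo,
        ← intervalIntegral.integral_of_le ht.1]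
      have := aux_ftc r (γ+1) 0 t hr0 (by linarith) ht.1 h1tr
      rw [show -(γ+1+1) = -(γ+2) by ring] at this
      simp only [hg₂]
      rw [this]
      norm_num
    have hlint : (∫⁻ u in Set.Ioo (0:ℝ) t, ENNReal.ofReal (g₂ u))
        = ENNReal.ofReal (((1 - t*r) ^ (-(γ+1)) - 1) / ((γ+1) * r)) := by
      rw [← hvalue]
      rw [← MeasureTheory.ofReal_integral_eq_lintegral_ofReal hint]
      filter_upwards [ae_restrict_mem measurableSet_Ioo] with u hu
      exact Real.rpow_nonneg (hposIoo u ⟨hu.1.le, hu.2.le⟩).le _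
    have hone_le : (1:ℝ) ≤ (1 - t*r) ^ (-(γ+1)) := by
      apply Real.one_le_rpow_of_pos_of_le_one_of_nonpos h1tr
      · nlinarith [ht.1]
      · linarith
    have hvnn : 0 ≤ ((1 - t*r) ^ (-(γ+1)) - 1) / ((γ+1) * r) :=
      div_nonneg (by linarith) (by positivity)
    rw [hinner, hlint, hc]
    rw [← ENNReal.ofReal_mul (by positivity), ← ENNReal.ofReal_one,
      ← ENNReal.ofReal_add zero_le_one (by positivity)]
    congr 1
    rw [one_div, ← Real.rpow_neg h1tr.le]
    field_simp
    ring
  -- measurability of the kernel on the product space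
  have hkm : Measurable fun p : ℝ × ℝ => k p.1 p.2 := by
    have hEq : (fun p : ℝ × ℝ => k p.1 p.2) =
        Set.indicator {q : ℝ × ℝ | q.2 < q.1 ∧ q.1 < 1}
          (fun q => ENNReal.ofReal (g₂ q.2)) := by
      funext p
      show Set.indicator (Set.Ioo p.2 1) (fun _ => ENNReal.ofReal (g₂ p.2)) p.1 = _
      simp [Set.indicator_apply, Set.mem_Ioo, Set.mem_setOf_eq]
    rw [hEq]
    apply Measurable.indicator (by fun_prop)
    exact MeasurableSet.inter (measurableSet_lt measurable_snd measurable_fst)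
      (measurableSet_lt measurable_fst measurable_const)
  have hswap : ∫⁻ t, (∫⁻ u in Set.Ioo (0:ℝ) 1, k t u) ∂μ
      = ∫⁻ u in Set.Ioo (0:ℝ) 1, (∫⁻ t, k t u ∂μ) := by
    exact lintegral_lintegral_swap hkm.aemeasurable
  -- evaluate inner integral over t
  have hinner2 : ∀ u : ℝ, (∫⁻ t, k t u ∂μ) ≤ ENNReal.ofReal (g₂ u) * μ (Set.Ico u 1) := by
    intro u
    have hEq : (fun t => k t u) =
        Set.indicator (Set.Ioo u 1) (fun _ => ENNReal.ofReal (g₂ u)) := rfl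
    rw [hEq, lintegral_indicator measurableSet_Ioo, setLIntegral_const]
    exact mul_le_mul_right (measure_mono Set.Ioo_subset_Ico_self) _
  -- the two bounds
  set P1 : ℝ≥0∞ := ENNReal.ofReal ((1-t₀) ^ (-(γ+2))) * μ Set.univ with hP1
  set P2 : ℝ≥0∞ := ENNReal.ofReal (ε₁ * ((1-r) ^ (-(γ+δ)) / ((γ+δ) * r))) with hP2
  have hpart1 : ∫⁻ u in Set.Ioo (0:ℝ) t₀, ENNReal.ofReal (g₂ u) * μ (Set.Ico u 1) ≤ P1 := by
    have hptw : ∀ᵐ u ∂(volume.restrict (Set.Ioo (0:ℝ) t₀)),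
        ENNReal.ofReal (g₂ u) * μ (Set.Ico u 1) ≤ P1 := by
      filter_upwards [ae_restrict_mem measurableSet_Ioo] with u hu
      refine mul_le_mul' (ENNReal.ofReal_le_ofReal ?_) (measure_mono (Set.subset_univ _))
      apply Real.rpow_le_rpow_of_nonpos h1t₀ (by nlinarith [hu.1, hu.2]) (by linarith)
    calc ∫⁻ u in Set.Ioo (0:ℝ) t₀, ENNReal.ofReal (g₂ u) * μ (Set.Ico u 1)
        ≤ ∫⁻ _ in Set.Ioo (0:ℝ) t₀, P1 := lintegral_mono_ae hptw
      _ = P1 * volume (Set.Ioo (0:ℝ) t₀) := setLIntegral_const _ _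
      _ ≤ P1 * 1 := by
          refine mul_le_mul_right ?_ _
          rw [Real.volume_Ioo]
          exact ENNReal.ofReal_le_one.mpr (by linarith)
      _ = P1 := mul_one _
  have hpart2 : ∫⁻ u in Set.Ico t₀ 1, ENNReal.ofReal (g₂ u) * μ (Set.Ico u 1) ≤ P2 := by
    have hptw : ∀ᵐ u ∂(volume.restrict (Set.Ico t₀ (1:ℝ))),
        ENNReal.ofReal (g₂ u) * μ (Set.Ico u 1)
          ≤ ENNReal.ofReal (ε₁ * (1 - u*r) ^ (-(γ+δ+1))) := by
      filter_upwards [ae_restrict_mem measurableSet_Ico] with u hu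
      have hu0 : 0 < u := lt_of_lt_of_le ht₀0 hu.1
      have h1ur : 0 < 1 - u * r := by nlinarith [hu.2]
      have h1u : 0 ≤ 1 - u := by linarith [hu.2]
      have hμ : μ (Set.Ico u 1) ≤ ENNReal.ofReal (ε₁ * (1-u) ^ (1-δ)) := by
        rw [ENNReal.le_ofReal_iff_toReal_le (measure_ne_top μ _)
          (by positivity)]
        exact hbound u hu.1 hu.2
      calc ENNReal.ofReal (g₂ u) * μ (Set.Ico u 1)
          ≤ ENNReal.ofReal (g₂ u) * ENNReal.ofReal (ε₁ * (1-u) ^ (1-δ)) :=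
            mul_le_mul_right hμ _
        _ = ENNReal.ofReal (g₂ u * (ε₁ * (1-u) ^ (1-δ))) :=
            (ENNReal.ofReal_mul (Real.rpow_nonneg h1ur.le _)).symm
        _ ≤ ENNReal.ofReal (ε₁ * (1 - u*r) ^ (-(γ+δ+1))) := by
            apply ENNReal.ofReal_le_ofReal
            have ha : (1-u) ^ (1-δ) ≤ (1-u*r) ^ (1-δ) :=
              Real.rpow_le_rpow h1u (by nlinarith) (by linarith)
            have hb : g₂ u * (ε₁ * (1-u) ^ (1-δ)) ≤ g₂ u * (ε₁ * (1-u*r) ^ (1-δ)) := by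
              apply mul_le_mul_of_nonneg_left _ (Real.rpow_nonneg h1ur.le _)
              exact mul_le_mul_of_nonneg_left ha hε₁.le
            refine le_trans hb (le_of_eq ?_)
            rw [hg₂]
            show (1 - u*r) ^ (-(γ+2)) * (ε₁ * (1-u*r) ^ (1-δ)) = _
            rw [show ε₁ * (1-u*r) ^ (-(γ+δ+1))
                = ε₁ * ((1-u*r) ^ (-(γ+2)) * (1-u*r) ^ (1-δ)) by
              rw [← Real.rpow_add h1ur]; ring_nf]
            ring
    have hcont2 : ContinuousOn (fun u : ℝ => (1 - u * r) ^ (-(γ+δ+1))) (Set.Icc t₀ 1) :=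
      aux_cont r _ _ (by intro u hu; nlinarith [hu.1, hu.2])
    have hint2 : IntegrableOn (fun u => ε₁ * (1 - u*r) ^ (-(γ+δ+1))) (Set.Ico t₀ 1) := by
      exact ((continuousOn_const.mul hcont2).integrableOn_Icc).mono_set Set.Ico_subset_Icc_self
    have hnn2 : 0 ≤ᵐ[volume.restrict (Set.Ico t₀ (1:ℝ))]
        fun u => ε₁ * (1 - u*r) ^ (-(γ+δ+1)) := by
      filter_upwards [ae_restrict_mem measurableSet_Ico] with u hu
      have h1ur : 0 < 1 - u * r := by nlinarith [hu.2, lt_of_lt_of_le ht₀0 hu.1]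
      positivity
    calc ∫⁻ u in Set.Ico t₀ 1, ENNReal.ofReal (g₂ u) * μ (Set.Ico u 1)
        ≤ ∫⁻ u in Set.Ico t₀ 1, ENNReal.ofReal (ε₁ * (1 - u*r) ^ (-(γ+δ+1))) :=
          lintegral_mono_ae hptw
      _ = ENNReal.ofReal (∫ u in Set.Ico t₀ 1, ε₁ * (1 - u*r) ^ (-(γ+δ+1))) :=
          (MeasureTheory.ofReal_integral_eq_lintegral_ofReal hint2 hnn2).symm
      _ ≤ P2 := by
          apply ENNReal.ofReal_le_ofReal
          rw [MeasureTheory.integral_Ico_eq_integral_Ioo,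
            ← MeasureTheory.integral_Ioc_eq_integral_Ioo,
            ← intervalIntegral.integral_of_le ht₀1.le,
            intervalIntegral.integral_const_mul,
            aux_ftc r (γ+δ) t₀ 1 hr0 hγδ ht₀1.le (by linarith [one_mul r])]
          apply mul_le_mul_of_nonneg_left _ hε₁.le
          rw [one_mul]
          apply div_le_div_of_nonneg_right ?_ (by positivity)
          have : 0 ≤ (1 - t₀*r) ^ (-(γ+δ)) := Real.rpow_nonneg (by nlinarith) _
          linarith
  -- assemble
  have hμuniv : μ Set.univ = ENNReal.ofReal M :=
    (ENNReal.ofReal_toReal (measure_ne_top μ _)).symm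
  have hsplitle : ∫⁻ u in Set.Ioo (0:ℝ) 1, (∫⁻ t, k t u ∂μ) ≤ P1 + P2 := by
    have hmono : ∫⁻ u in Set.Ioo (0:ℝ) 1, (∫⁻ t, k t u ∂μ)
        ≤ ∫⁻ u in Set.Ioo (0:ℝ) 1, ENNReal.ofReal (g₂ u) * μ (Set.Ico u 1) :=
      lintegral_mono fun u => hinner2 u
    refine le_trans hmono ?_
    rw [← Set.Ioo_union_Ico_eq_Ioo ht₀0 ht₀1.le,
      lintegral_union measurableSet_Ico
        (Set.disjoint_left.mpr fun u hu hu' => absurd hu.2 (not_lt.mpr hu'.1))]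
    exact add_le_add hpart1 hpart2
  have hcP2 : c * P2 = ENNReal.ofReal (ε₁ * (γ+1) / (γ+δ) * (1-r) ^ (-(γ+δ))) := by
    rw [hc, hP2, ← ENNReal.ofReal_mul (by positivity)]
    congr 1
    field_simp
  have hcP1 : c * P1 ≤ ENNReal.ofReal (M * ((γ+1) * (1-t₀) ^ (-(γ+2)))) := by
    rw [hc, hP1, hμuniv, ← mul_assoc, ← ENNReal.ofReal_mul (by positivity),
      ← ENNReal.ofReal_mul (by positivity)]
    apply ENNReal.ofReal_le_ofReal
    have h1 : (0:ℝ) ≤ (1-t₀) ^ (-(γ+2)) := Real.rpow_nonneg h1t₀.le _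
    nlinarith [mul_nonneg (mul_nonneg (mul_nonneg
      (by linarith : (0:ℝ) ≤ γ+1) h1) hM0) (by linarith : (0:ℝ) ≤ 1-r)]
  calc ∫⁻ t, ENNReal.ofReal (1 / (1 - t * r) ^ (γ + 1)) ∂μ
      = ∫⁻ t, (1 + c * ∫⁻ u in Set.Ioo (0:ℝ) 1, k t u) ∂μ := lintegral_congr_ae hpt
    _ = μ Set.univ + c * ∫⁻ t, (∫⁻ u in Set.Ioo (0:ℝ) 1, k t u) ∂μ := by
        rw [lintegral_add_left measurable_const,
          lintegral_const_mul' _ _ (by simp [hc] : c ≠ ⊤), lintegral_one]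
    _ ≤ ENNReal.ofReal M + (c * P1 + c * P2) := by
        rw [hμuniv, hswap]
        refine add_le_add le_rfl ?_
        rw [← mul_add]
        exact mul_le_mul_right hsplitle _
    _ ≤ ENNReal.ofReal M + (ENNReal.ofReal (M * ((γ+1) * (1-t₀) ^ (-(γ+2))))
          + ENNReal.ofReal (ε₁ * (γ+1) / (γ+δ) * (1-r) ^ (-(γ+δ)))) :=
        add_le_add le_rfl (add_le_add hcP1 (le_of_eq hcP2))
    _ ≤ ENNReal.ofReal RHS := by
        have hA : (0:ℝ) ≤ M * ((γ+1) * (1-t₀) ^ (-(γ+2))) :=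
          mul_nonneg hM0 (by positivity)
        have hB : (0:ℝ) ≤ ε₁ * (γ+1) / (γ+δ) * (1-r) ^ (-(γ+δ)) := by positivity
        rw [← ENNReal.ofReal_add hA hB, ← ENNReal.ofReal_add hM0 (add_nonneg hA hB)]
        apply ENNReal.ofReal_le_ofReal
        rw [hRHS]
        exact le_of_eq (by ring)

theorem vanishing_carleson_integral_estimate
    (μ : Measure ℝ) [IsFiniteMeasure μ]
    (hsupp : μ (Set.Ico (0:ℝ) 1)ᶜ = 0)
    (δ γ : ℝ) (hδ : δ < 1) (hγ : 0 < γ) (hγδ : 0 < γ + δ)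
    (hC : Tendsto (fun t : ℝ => (μ (Set.Ico t 1)).toReal / (1 - t) ^ (1 - δ))
      (nhdsWithin 1 (Set.Iio 1)) (nhds 0)) :
    Tendsto (fun r : ℝ =>
        (1 - r) ^ (γ + δ) * (∫ t, 1 / (1 - t * r) ^ (γ + 1) ∂μ))
      (nhdsWithin 1 (Set.Iio 1)) (nhds 0) := by
  have hae : ∀ᵐ t ∂μ, t ∈ Set.Ico (0:ℝ) 1 := by
    rw [MeasureTheory.ae_iff]
    exact hsupp
  rw [Metric.tendsto_nhds]
  intro ε hε
  set ε₁ := ε * (γ+δ) / (4*(γ+1)) with hε₁def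
  have hε₁ : 0 < ε₁ := by positivity
  have hev := hC.eventually_lt_const hε₁
  rw [Filter.eventually_iff, mem_nhdsLT_iff_exists_Ioo_subset] at hev
  obtain ⟨l, hl, hsub⟩ := hev
  set t₀ := (max l (1/2) + 1) / 2 with ht₀def
  have hml : l ≤ max l (1/2) := le_max_left _ _
  have hm2 : (1/2:ℝ) ≤ max l (1/2) := le_max_right _ _
  have hm1 : max l (1/2) < 1 := max_lt hl (by norm_num)
  have ht₀0 : 0 < t₀ := by rw [ht₀def]; linarith
  have ht₀1 : t₀ < 1 := by rw [ht₀def]; linarith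
  have hlt₀ : l < t₀ := by rw [ht₀def]; linarith
  have hbound : ∀ u, t₀ ≤ u → u < 1 → (μ (Set.Ico u 1)).toReal ≤ ε₁ * (1-u) ^ (1-δ) := by
    intro u hu1 hu2
    have hu : u ∈ Set.Ioo l 1 := ⟨lt_of_lt_of_le hlt₀ hu1, hu2⟩
    have := hsub hu
    rw [Set.mem_setOf_eq,
      div_lt_iff₀ (Real.rpow_pos_of_pos (by linarith : (0:ℝ) < 1-u) _)] at this
    linarith
  set C := (μ Set.univ).toReal * (1 + (γ+1) * (1-t₀) ^ (-(γ+2))) with hCdef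
  have hC0 : 0 ≤ C := by
    rw [hCdef]
    exact mul_nonneg ENNReal.toReal_nonneg
      (by nlinarith [Real.rpow_nonneg (by linarith : (0:ℝ) ≤ 1-t₀) (-(γ+2)),
        hγ])
  have hεq : ε₁ * (γ+1) / (γ+δ) = ε / 4 := by
    rw [hε₁def]; field_simp
  have htend : Tendsto (fun r : ℝ => (1-r) ^ (γ+δ) * C) (nhdsWithin 1 (Set.Iio 1)) (nhds 0) := by
    have h1 : Tendsto (fun r : ℝ => 1 - r) (nhdsWithin 1 (Set.Iio 1)) (nhds 0) := by
      have h0 : Continuous (fun r : ℝ => 1 - r) := by fun_prop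
      have := (h0.tendsto (1:ℝ)).mono_left (nhdsWithin_le_nhds (s := Set.Iio (1:ℝ)))
      simpa using this
    have h2 : ContinuousAt (fun x : ℝ => x ^ (γ+δ)) 0 :=
      Real.continuousAt_rpow_const 0 _ (Or.inr hγδ.le)
    have h3 : Tendsto (fun r : ℝ => (1-r) ^ (γ+δ)) (nhdsWithin 1 (Set.Iio 1)) (nhds 0) := by
      have := (h2.tendsto.comp h1)
      simpa [Real.zero_rpow hγδ.ne', Function.comp_def] using this
    simpa using h3.mul_const C
  have hev2 := htend.eventually_lt_const (by linarith : (0:ℝ) < ε/2)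
  have hev1 : ∀ᶠ r in nhdsWithin 1 (Set.Iio 1), r ∈ Set.Ioo (0:ℝ) 1 :=
    Filter.eventually_of_mem (Ioo_mem_nhdsLT_of_mem (by norm_num : (1:ℝ) ∈ Set.Ioc 0 1))
      (fun x hx => hx)
  filter_upwards [hev1, hev2] with r hr hr2
  obtain ⟨hr0, hr1⟩ := hr
  have h1r : 0 < 1 - r := by linarith
  have hkey := key_bound μ hsupp δ γ hδ hγ hγδ ε₁ t₀ hε₁ ⟨ht₀0, ht₀1⟩ hbound r ⟨hr0, hr1⟩
  have hInn : 0 ≤ ∫ t, 1 / (1 - t * r) ^ (γ + 1) ∂μ := by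
    apply integral_nonneg_of_ae
    filter_upwards [hae] with t ht
    have : t * r ≤ t := by nlinarith [ht.1]
    have h1tr : 0 < 1 - t * r := by linarith [ht.2]
    positivity
  have hg0 : 0 ≤ (1 - r) ^ (γ + δ) * ∫ t, 1 / (1 - t * r) ^ (γ + 1) ∂μ :=
    mul_nonneg (Real.rpow_nonneg h1r.le _) hInn
  rw [Real.dist_eq, sub_zero, abs_of_nonneg hg0]
  have hmul := mul_le_mul_of_nonneg_left hkey (Real.rpow_nonneg h1r.le (γ+δ))
  have hcancel : (1-r) ^ (γ+δ) * (1-r) ^ (-(γ+δ)) = 1 := by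
    rw [← Real.rpow_add h1r, show γ + δ + -(γ+δ) = (0:ℝ) by ring, Real.rpow_zero]
  calc (1 - r) ^ (γ + δ) * ∫ t, 1 / (1 - t * r) ^ (γ + 1) ∂μ
      ≤ (1-r) ^ (γ+δ) * (C + ε₁ * (γ+1) / (γ+δ) * (1-r) ^ (-(γ+δ))) := hmul
    _ = (1-r) ^ (γ+δ) * C + ε₁ * (γ+1) / (γ+δ) * ((1-r) ^ (γ+δ) * (1-r) ^ (-(γ+δ))) := by
        ring
    _ = (1-r) ^ (γ+δ) * C + ε / 4 := by rw [hcancel, hεq]; ring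
    _ < ε := by linarith
end

section
/- Let μ be a Carleson measure on [0,1) (i.e., μ_n ≤ C/n for some C > 0 and all n ≥ 1), and let w be a weight on the unit disc such that w(r)|log(1-r)| → 0 as r → 1⁻. Then the function C_μ(1)(z) = ∑ μ_n zⁿ satisfies lim_{|z|→1⁻} w(|z|)|C_μ(1)(z)| = 0. -/
open MeasureTheory Filter

theorem Cmu_one_in_Hw0
    (μ : Measure ℝ) [IsFiniteMeasure μ]
    (hsupp : μ (Set.Ico (0:ℝ) 1)ᶜ = 0)
    (C : ℝ) (hC : 0 < C)
    (hCarleson : ∀ n : ℕ, (∫ t, t ^ n ∂μ) ≤ C / ((n : ℝ) + 1))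
    (w : ℝ → ℝ)
    (hwpos : ∀ r ∈ Set.Ico (0:ℝ) 1, 0 < w r)
    (hwcont : ContinuousOn w (Set.Ico (0:ℝ) 1))
    (hwdec : ∀ r ∈ Set.Ico (0:ℝ) 1, ∀ r' ∈ Set.Ico (0:ℝ) 1, r ≤ r' → w r' ≤ w r)
    (hwlog : Tendsto (fun r : ℝ => w r * |Real.log (1 - r)|)
      (nhdsWithin 1 (Set.Iio 1)) (nhds 0)) :
    Tendsto (fun z : ℂ => w ‖z‖ * ‖∑' n : ℕ, ((∫ t, t ^ n ∂μ : ℝ) : ℂ) * z ^ n‖)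
      (Filter.comap (fun z : ℂ => ‖z‖) (nhdsWithin 1 (Set.Iio 1))) (nhds 0) := by
  -- moments are nonnegative
  have hμnonneg : ∀ n : ℕ, 0 ≤ ∫ t, t ^ n ∂μ := by
    intro n
    apply integral_nonneg_of_ae
    have hae : ∀ᵐ t ∂μ, t ∈ Set.Ico (0:ℝ) 1 := by
      rw [ae_iff]
      have : {a : ℝ | ¬ a ∈ Set.Ico (0:ℝ) 1} = (Set.Ico (0:ℝ) 1)ᶜ := rfl
      rw [this, hsupp]
    filter_upwards [hae] with t ht
    exact pow_nonneg ht.1 n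
  have hμle : ∀ n : ℕ, |∫ t, t ^ n ∂μ| ≤ C / ((n : ℝ) + 1) := by
    intro n
    rw [abs_of_nonneg (hμnonneg n)]
    exact hCarleson n
  -- key bound for 1/2 ≤ ‖z‖ < 1
  have key : ∀ z : ℂ, ‖z‖ ∈ Set.Ico (1/2 : ℝ) 1 →
      ‖∑' n : ℕ, ((∫ t, t ^ n ∂μ : ℝ) : ℂ) * z ^ n‖ ≤ 2 * C * |Real.log (1 - ‖z‖)| := by
    intro z hz
    set r := ‖z‖ with hrdef
    have hr2 : (1/2 : ℝ) ≤ r := hz.1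
    have hr1 : r < 1 := hz.2
    have hr0 : 0 < r := lt_of_lt_of_le (by norm_num) hr2
    have hLnonneg : 0 ≤ -Real.log (1 - r) := by
      have : Real.log (1 - r) ≤ 0 := Real.log_nonpos (by linarith) (by linarith)
      linarith
    have habs : |Real.log (1 - r)| = -Real.log (1 - r) := abs_of_nonpos (by linarith)
    have H : HasSum (fun n : ℕ => r ^ (n+1) / (n+1)) (-Real.log (1 - r)) :=
      Real.hasSum_pow_div_log_of_abs_lt_one (by rw [abs_of_nonneg hr0.le]; exact hr1)
    have hlog : HasSum (fun n : ℕ => r ^ n / (n+1)) (-Real.log (1 - r) / r) := by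
      have H2 := H.div_const r
      have heq : (fun n : ℕ => r ^ (n+1) / (n+1) / r) = fun n : ℕ => r ^ n / (n+1) := by
        funext n
        rw [pow_succ]
        field_simp
      rwa [heq] at H2
    have hsum1 : Summable (fun n : ℕ => C / ((n : ℝ) + 1) * r ^ n) := by
      have heq : (fun n : ℕ => C / ((n : ℝ) + 1) * r ^ n) = fun n : ℕ => C * (r ^ n / (n+1)) := by
        funext n; ring
      rw [heq]
      exact hlog.summable.mul_left C
    have hbound : ∀ n : ℕ, ‖((∫ t, t ^ n ∂μ : ℝ) : ℂ) * z ^ n‖ ≤ C / ((n : ℝ) + 1) * r ^ n := by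
      intro n
      rw [norm_mul, norm_pow, Complex.norm_real, Real.norm_eq_abs]
      exact mul_le_mul_of_nonneg_right (hμle n) (pow_nonneg (norm_nonneg z) n)
    have hsummC : Summable (fun n : ℕ => ((∫ t, t ^ n ∂μ : ℝ) : ℂ) * z ^ n) :=
      Summable.of_norm_bounded hsum1 hbound
    have hsumnorm : Summable (fun n : ℕ => ‖((∫ t, t ^ n ∂μ : ℝ) : ℂ) * z ^ n‖) :=
      Summable.of_nonneg_of_le (fun n => norm_nonneg _) hbound hsum1
    calc ‖∑' n : ℕ, ((∫ t, t ^ n ∂μ : ℝ) : ℂ) * z ^ n‖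
        ≤ ∑' n : ℕ, ‖((∫ t, t ^ n ∂μ : ℝ) : ℂ) * z ^ n‖ := norm_tsum_le_tsum_norm hsumnorm
      _ ≤ ∑' n : ℕ, C / ((n : ℝ) + 1) * r ^ n := Summable.tsum_le_tsum hbound hsumnorm hsum1
      _ = C * (-Real.log (1 - r) / r) := by
          have heq : (fun n : ℕ => C / ((n : ℝ) + 1) * r ^ n)
              = fun n : ℕ => C * (r ^ n / (n+1)) := by
            funext n; ring
          rw [heq, tsum_mul_left, hlog.tsum_eq]
      _ ≤ 2 * C * |Real.log (1 - r)| := by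
          rw [habs]
          have h1 : -Real.log (1 - r) / r ≤ 2 * -Real.log (1 - r) := by
            rw [div_le_iff₀ hr0]
            nlinarith
          nlinarith
  -- right-hand comparison function tends to 0
  have htend : Tendsto (fun z : ℂ => 2 * C * (w ‖z‖ * |Real.log (1 - ‖z‖)|))
      (Filter.comap (fun z : ℂ => ‖z‖) (nhdsWithin 1 (Set.Iio 1))) (nhds 0) := by
    have h := (hwlog.comp (tendsto_comap (f := fun z : ℂ => ‖z‖))).const_mul (2 * C)
    simpa using h
  -- eventual facts
  have hev : ∀ᶠ r in nhdsWithin (1:ℝ) (Set.Iio 1), r ∈ Set.Ico (1/2 : ℝ) 1 := by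
    have h1 : ∀ᶠ r in nhdsWithin (1:ℝ) (Set.Iio 1), r ∈ Set.Iio (1:ℝ) :=
      eventually_mem_nhdsWithin
    have h2 : ∀ᶠ r in nhdsWithin (1:ℝ) (Set.Iio 1), (1/2 : ℝ) < r :=
      (eventually_gt_nhds (by norm_num : (1/2 : ℝ) < 1)).filter_mono nhdsWithin_le_nhds
    filter_upwards [h1, h2] with r hr1 hr2
    exact ⟨hr2.le, hr1⟩
  have hevz : ∀ᶠ z : ℂ in Filter.comap (fun z : ℂ => ‖z‖) (nhdsWithin 1 (Set.Iio 1)),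
      ‖z‖ ∈ Set.Ico (1/2 : ℝ) 1 :=
    (tendsto_comap (f := fun z : ℂ => ‖z‖)).eventually hev
  apply squeeze_zero' (f := fun z : ℂ => w ‖z‖ * ‖∑' n : ℕ, ((∫ t, t ^ n ∂μ : ℝ) : ℂ) * z ^ n‖)
    ?_ ?_ htend
  · filter_upwards [hevz] with z hz
    have hw : 0 < w ‖z‖ := hwpos _ ⟨le_trans (by norm_num) hz.1, hz.2⟩
    positivity
  · filter_upwards [hevz] with z hz
    have hw : 0 < w ‖z‖ := hwpos _ ⟨le_trans (by norm_num) hz.1, hz.2⟩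
    have := mul_le_mul_of_nonneg_left (key z hz) hw.le
    calc w ‖z‖ * ‖∑' n : ℕ, ((∫ t, t ^ n ∂μ : ℝ) : ℂ) * z ^ n‖
        ≤ w ‖z‖ * (2 * C * |Real.log (1 - ‖z‖)|) := this
      _ = 2 * C * (w ‖z‖ * |Real.log (1 - ‖z‖)|) := by ring
end

section
/- Let μ be a positive finite Borel measure on [0,1) with μ((0,1)) > 0, moments μ_n, and suppose λ is an eigenvalue of the Cesàro-type operator C_μ acting on H(𝔻), where C_μ(∑ a_n zⁿ) = ∑ μ_n(∑_{k≤n} a_k) zⁿ. Then λ = μ_{n₀} for some n₀ ∈ ℕ₀, i.e., σ_p(C_μ, H(𝔻)) ⊆ {μ_n : n ∈ ℕ₀}. -/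
/-!
The eigen-equations form a lower-triangular system: if `λ` differs from every moment, then by
strong induction `a₀ = ⋯ = a_{n-1} = 0`, so the `n`-th equation collapses to
`(μ_n - λ) a_n = 0` and forces `a_n = 0` as well.
-/

open MeasureTheory Finset

section TriangularSystem

variable {R : Type*} [CommRing R] [NoZeroDivisors R] {m a : ℕ → R} {lam : R}

theorem eq_zero_of_mul_sum_range_eq_mul
    (heig : ∀ n, m n * ∑ k ∈ range (n + 1), a k = lam * a n) (hlam : ∀ n, lam ≠ m n) :
    a = 0 := by
  funext n
  induction n using Nat.strong_induction_on with
  | _ n ih =>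
    have hsum : ∑ k ∈ range (n + 1), a k = a n := by
      rw [sum_range_succ, sum_eq_zero fun k hk => ih k (mem_range.mp hk), zero_add]
    have hfactor : (m n - lam) * a n = 0 := by
      have h := heig n
      rw [hsum] at h
      linear_combination h
    exact (mul_eq_zero.mp hfactor).resolve_left (sub_ne_zero.mpr (hlam n).symm)

theorem exists_eq_of_mul_sum_range_eq_mul
    (heig : ∀ n, m n * ∑ k ∈ range (n + 1), a k = lam * a n) (hne : a ≠ 0) :
    ∃ n, lam = m n := by
  by_contra! hlam
  exact hne (eq_zero_of_mul_sum_range_eq_mul heig hlam)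

end TriangularSystem

theorem point_spectrum_subset_moments_general
    (μ : Measure ℝ)
    (lam : ℂ) (a : ℕ → ℂ)
    (hne : a ≠ 0)
    (heig : ∀ n : ℕ, ((∫ t, t ^ n ∂μ : ℝ) : ℂ) *
        (∑ k ∈ Finset.range (n + 1), a k) = lam * a n) :
    ∃ n₀ : ℕ, lam = ((∫ t, t ^ n₀ ∂μ : ℝ) : ℂ) :=
  exists_eq_of_mul_sum_range_eq_mul heig hne

/-- The point spectrum of the Cesàro-type operator `C_μ` on `H(𝔻)` is contained in the
set of moments. A holomorphic function on the disc is represented by its Taylor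
coefficient sequence `a`, and the eigen-equation `C_μ f = λ f` by the coefficientwise
identities `μ_n (∑_{k ≤ n} a_k) = λ a_n`. -/
theorem point_spectrum_subset_moments
    (μ : Measure ℝ) [IsFiniteMeasure μ]
    (hsupp : μ (Set.Ico (0:ℝ) 1)ᶜ = 0)
    (hpos : 0 < μ (Set.Ioo (0:ℝ) 1))
    (lam : ℂ) (a : ℕ → ℂ)
    (hconv : ∀ z : ℂ, ‖z‖ < 1 → Summable (fun n : ℕ => a n * z ^ n))
    (hne : a ≠ 0)
    (heig : ∀ n : ℕ, ((∫ t, t ^ n ∂μ : ℝ) : ℂ) *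
        (∑ k ∈ Finset.range (n + 1), a k) = lam * a n) :
    ∃ n₀ : ℕ, lam = ((∫ t, t ^ n₀ ∂μ : ℝ) : ℂ) :=
  point_spectrum_subset_moments_general μ lam a hne heig
end

section
/- Let μ be a positive finite Borel measure on [0,1) with μ((0,1)) > 0 and moments μ_n. For each n₀ ∈ ℕ₀, the power series f_{n₀}(z) = z^{n₀} + ∑_{k>n₀} a_k z^k with a_k = μ_k μ_{n₀}^{k-n₀-1} / ∏_{j=n₀+1}^{k}(μ_{n₀} - μ_j) has radius of convergence at least 1, hence defines a holomorphic function on the unit disc; moreover C_μ f_{n₀} = μ_{n₀} f_{n₀}. -/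
open MeasureTheory Finset Filter Topology

/-- For each `n₀`, the explicit power series `f_{n₀}` from (3.1) has radius of
convergence at least `1`, hence defines a holomorphic function on the unit disc,
and is an eigenfunction of `C_μ` (expressed coefficientwise) for the eigenvalue
`μ_{n₀}`. -/
theorem eigenfunction_of_Cmu
    (μ : Measure ℝ) [IsFiniteMeasure μ]
    (hsupp : μ (Set.Ico (0:ℝ) 1)ᶜ = 0)
    (hpos : 0 < μ (Set.Ioo (0:ℝ) 1))
    (n₀ : ℕ) (a : ℕ → ℝ)
    (h1 : ∀ k, k < n₀ → a k = 0)
    (h2 : a n₀ = 1)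
    (h3 : ∀ k, n₀ < k → a k =
      (∫ t, t ^ k ∂μ) * (∫ t, t ^ n₀ ∂μ) ^ (k - n₀ - 1) /
        ∏ j ∈ Finset.Icc (n₀ + 1) k, ((∫ t, t ^ n₀ ∂μ) - (∫ t, t ^ j ∂μ))) :
    (∀ z : ℂ, ‖z‖ < 1 → Summable (fun k : ℕ => (a k : ℂ) * z ^ k)) ∧
    (∀ k : ℕ, (∫ t, t ^ k ∂μ) * (∑ j ∈ Finset.range (k + 1), a j) =
      (∫ t, t ^ n₀ ∂μ) * a k) := by
  set M : ℕ → ℝ := fun n => ∫ t, t ^ n ∂μ with hMdef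
  have hae : ∀ᵐ t ∂μ, t ∈ Set.Ico (0:ℝ) 1 := by
    rw [MeasureTheory.ae_iff]
    have : {t : ℝ | ¬ t ∈ Set.Ico (0:ℝ) 1} = (Set.Ico (0:ℝ) 1)ᶜ := rfl
    rw [this]; exact hsupp
  have hint : ∀ n : ℕ, Integrable (fun t : ℝ => t ^ n) μ := by
    intro n
    refine (integrable_const (1:ℝ)).mono' ((continuous_pow n).aestronglyMeasurable) ?_
    filter_upwards [hae] with t ht
    rw [Real.norm_eq_abs, abs_pow]
    exact pow_le_one₀ (abs_nonneg t) (abs_lt.2 ⟨by linarith [ht.1], ht.2⟩).le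
  have hMpos : ∀ n, 0 < M n := by
    intro n
    have hnn : 0 ≤ᵐ[μ] fun t : ℝ => t ^ n := by
      filter_upwards [hae] with t ht
      exact pow_nonneg ht.1 n
    rw [hMdef]
    refine (integral_pos_iff_support_of_nonneg_ae hnn (hint n)).2 ?_
    refine lt_of_lt_of_le hpos (measure_mono ?_)
    intro t ht
    exact pow_ne_zero n (ne_of_gt ht.1)
  have hMlt : ∀ j k : ℕ, j < k → M k < M j := by
    intro j k hjk
    have hsub : M j - M k = ∫ t, (t ^ j - t ^ k) ∂μ := by
      rw [hMdef]; simp [integral_sub (hint j) (hint k)]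
    have hnn : 0 ≤ᵐ[μ] fun t : ℝ => t ^ j - t ^ k := by
      filter_upwards [hae] with t ht
      have := pow_le_pow_of_le_one ht.1 ht.2.le hjk.le
      simp only [Pi.zero_apply]
      linarith
    have hintsub : Integrable (fun t : ℝ => t ^ j - t ^ k) μ := (hint j).sub (hint k)
    have : 0 < M j - M k := by
      rw [hsub]
      refine (integral_pos_iff_support_of_nonneg_ae hnn hintsub).2 ?_
      refine lt_of_lt_of_le hpos (measure_mono ?_)
      intro t ht
      have : t ^ k < t ^ j := pow_lt_pow_right_of_lt_one₀ ht.1 ht.2 hjk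
      simp only [Function.mem_support]
      intro h
      nlinarith
    linarith
  have hMlim : Tendsto M atTop (𝓝 0) := by
    have key : Tendsto (fun n : ℕ => ∫ t, t ^ n ∂μ) atTop (𝓝 (∫ t, (0:ℝ) ∂μ)) := by
      refine tendsto_integral_of_dominated_convergence (fun _ => (1:ℝ))
        (fun n => (continuous_pow n).aestronglyMeasurable) (integrable_const 1) ?_ ?_
      · intro n
        filter_upwards [hae] with t ht
        rw [Real.norm_eq_abs, abs_pow]
        exact pow_le_one₀ (abs_nonneg t) (abs_lt.2 ⟨by linarith [ht.1], ht.2⟩).le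
      · filter_upwards [hae] with t ht
        exact tendsto_pow_atTop_nhds_zero_of_lt_one ht.1 ht.2
    simpa [hMdef] using key
  set P : ℕ → ℝ := fun k => ∏ j ∈ Finset.Icc (n₀ + 1) k, (M n₀ - M j) with hPdef
  have hPpos : ∀ k, 0 < P k := by
    intro k
    refine Finset.prod_pos fun j hj => sub_pos.2 (hMlt n₀ j ?_)
    exact lt_of_lt_of_le (Nat.lt_succ_self n₀) (Finset.mem_Icc.1 hj).1
  have hS : ∀ k, n₀ ≤ k → ∑ j ∈ Finset.range (k + 1), a j = M n₀ ^ (k - n₀) / P k := by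
    intro k hk
    induction k, hk using Nat.le_induction with
    | base =>
      rw [Finset.sum_range_succ, Finset.sum_eq_zero fun j hj => h1 j (Finset.mem_range.1 hj),
        h2, hPdef]
      simp [Finset.Icc_eq_empty (by omega : ¬ n₀ + 1 ≤ n₀)]
    | succ k hk ih =>
      have hP1 : P (k + 1) = P k * (M n₀ - M (k + 1)) := by
        rw [hPdef]
        exact Finset.prod_Icc_succ_top (by omega) _
      have ha : a (k + 1) = M (k + 1) * M n₀ ^ (k - n₀) / P (k + 1) := by
        rw [h3 (k + 1) (by omega), show k + 1 - n₀ - 1 = k - n₀ from by omega]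
      rw [Finset.sum_range_succ, ih, ha, hP1]
      have hk1 : k + 1 - n₀ = (k - n₀) + 1 := by omega
      rw [hk1, pow_succ]
      have hpk := (hPpos k).ne'
      have hd : M n₀ - M (k + 1) ≠ 0 := (sub_pos.2 (hMlt n₀ (k + 1) (by omega))).ne'
      field_simp
      ring
  have heig : ∀ k : ℕ, M k * (∑ j ∈ Finset.range (k + 1), a j) = M n₀ * a k := by
    intro k
    rcases lt_trichotomy k n₀ with hk | hk | hk
    · rw [h1 k hk, Finset.sum_eq_zero fun j hj => h1 j (by
        have := Finset.mem_range.1 hj; omega)]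
      ring
    · subst hk
      rw [hS k le_rfl, h2, hPdef]
      simp [Finset.Icc_eq_empty (by omega : ¬ k + 1 ≤ k)]
    · rw [hS k hk.le, h3 k hk]
      have hk1 : k - n₀ = (k - n₀ - 1) + 1 := by omega
      rw [hk1, pow_succ]
      have hpk := (hPpos k).ne'
      rw [hPdef] at hpk ⊢
      simp only [hMdef, Nat.add_sub_cancel] at hpk ⊢
      field_simp
  refine ⟨?_, heig⟩
  -- positivity of coefficients
  have hapos : ∀ k, n₀ ≤ k → 0 < a k := by
    intro k hk
    rcases eq_or_lt_of_le hk with h | h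
    · rw [← h, h2]; norm_num
    · rw [h3 k h]
      exact div_pos (mul_pos (hMpos k) (pow_pos (hMpos n₀) _)) (hPpos k)
  have hbound : ∀ k, n₀ ≤ k → a (k + 1) * (M n₀ - M (k + 1)) ≤ M n₀ * a k := by
    intro k hk
    have hP1 : P (k + 1) = P k * (M n₀ - M (k + 1)) := by
      rw [hPdef]
      exact Finset.prod_Icc_succ_top (by omega) _
    have hd : (0:ℝ) < M n₀ - M (k + 1) := sub_pos.2 (hMlt n₀ (k + 1) (by omega))
    have ha : a (k + 1) = M (k + 1) * M n₀ ^ (k - n₀) / P (k + 1) := by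
      rw [h3 (k + 1) (by omega), show k + 1 - n₀ - 1 = k - n₀ from by omega]
    have hLHS : a (k + 1) * (M n₀ - M (k + 1)) = M (k + 1) * M n₀ ^ (k - n₀) / P k := by
      rw [ha, hP1, div_mul_eq_mul_div, div_eq_div_iff (mul_pos (hPpos k) hd).ne' (hPpos k).ne']
      ring
    have hRHS : M n₀ * a k = M k * M n₀ ^ (k - n₀) / P k := by
      rcases eq_or_lt_of_le hk with h | h
      · rw [← h, h2, hPdef]
        simp [Finset.Icc_eq_empty (by omega : ¬ n₀ + 1 ≤ n₀)]
      · rw [h3 k h]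
        have hk1 : k - n₀ = (k - n₀ - 1) + 1 := by omega
        rw [hk1, pow_succ]
        have hpk := (hPpos k).ne'
        rw [hPdef] at hpk ⊢
        simp only [hMdef, Nat.add_sub_cancel] at hpk ⊢
        field_simp
    rw [hLHS, hRHS]
    have hMk : M (k + 1) ≤ M k := (hMlt k (k + 1) (by omega)).le
    have h1' : (0:ℝ) ≤ M n₀ ^ (k - n₀) := (pow_pos (hMpos n₀) _).le
    exact (div_le_div_iff_of_pos_right (hPpos k)).2 (mul_le_mul_of_nonneg_right hMk h1')
  intro z hz
  set r : ℝ := (1 + ‖z‖) / 2 with hrdef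
  have hr1 : r < 1 := by rw [hrdef]; linarith
  have hzr : ‖z‖ < r := by rw [hrdef]; linarith [norm_nonneg z]
  -- the ratio tends to ‖z‖
  have htend : Tendsto (fun k : ℕ => ‖z‖ * M n₀ / (M n₀ - M (k + 1))) atTop
      (𝓝 (‖z‖ * M n₀ / (M n₀ - 0))) := by
    refine Tendsto.div tendsto_const_nhds (tendsto_const_nhds.sub ?_) (by rw [sub_zero]; exact (hMpos n₀).ne')
    exact hMlim.comp (tendsto_add_atTop_nat 1)
  have hlimval : ‖z‖ * M n₀ / (M n₀ - 0) = ‖z‖ := by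
    rw [sub_zero, mul_div_assoc, div_self (hMpos n₀).ne', mul_one]
  rw [hlimval] at htend
  have hev : ∀ᶠ k : ℕ in atTop, ‖z‖ * M n₀ / (M n₀ - M (k + 1)) ≤ r :=
    htend.eventually_le_const hzr
  refine summable_of_ratio_norm_eventually_le hr1 ?_
  filter_upwards [hev, eventually_ge_atTop n₀] with k hk1 hk2
  have hd : (0:ℝ) < M n₀ - M (k + 1) := sub_pos.2 (hMlt n₀ (k + 1) (by omega))
  have hnorm : ∀ m : ℕ, n₀ ≤ m → ‖(a m : ℂ) * z ^ m‖ = a m * ‖z‖ ^ m := by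
    intro m hm
    rw [norm_mul, norm_pow, Complex.norm_real, Real.norm_eq_abs,
      abs_of_pos (hapos m hm)]
  rw [hnorm (k + 1) (by omega), hnorm k hk2]
  have key : a (k + 1) * ‖z‖ ≤ r * a k := by
    have h1' : a (k + 1) ≤ M n₀ * a k / (M n₀ - M (k + 1)) :=
      (le_div_iff₀ hd).2 (hbound k hk2)
    have h2' : a (k + 1) * ‖z‖ ≤ (M n₀ * a k / (M n₀ - M (k + 1))) * ‖z‖ :=
      mul_le_mul_of_nonneg_right h1' (norm_nonneg z)
    refine h2'.trans ?_
    have : (M n₀ * a k / (M n₀ - M (k + 1))) * ‖z‖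
        = (‖z‖ * M n₀ / (M n₀ - M (k + 1))) * a k := by ring
    rw [this]
    exact mul_le_mul_of_nonneg_right hk1 (hapos k hk2).le
  calc a (k + 1) * ‖z‖ ^ (k + 1) = (a (k + 1) * ‖z‖) * ‖z‖ ^ k := by ring
    _ ≤ (r * a k) * ‖z‖ ^ k := mul_le_mul_of_nonneg_right key (pow_nonneg (norm_nonneg z) k)
    _ = r * (a k * ‖z‖ ^ k) := by ring
end
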